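/- arXiv:math/0510413 — 2 statements merged into one kernel-verified Lean document; each statement's English description precedes it below -/
import Mathlib

section
/- Let M be an immersed semiumbilical surface in ℝ⁴, and let (t₁,t₂) be a local orthonormal frame of TM satisfying α(t₁,t₂) = 0. Set B = ½(α(t₁,t₁) − α(t₂,t₂)) and H = ½(α(t₁,t₁) + α(t₂,t₂)), and let J be a fibrewise linear map of NM with J(N_pM) = N_pM, J² = −id, ⟨Ju, u⟩ = 0 and ⟨Ju, Ju⟩ = ⟨u, u⟩ for all u ∈ NM. Then ⟨H, JB⟩ is nowhere zero, so the normal section c = JB/⟨H, JB⟩ is well defined, and c satisfies c·α = g, i.e. ⟨c, α(X,Y)⟩ = ⟨X,Y⟩ for all tangent fields X,Y. -/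
/- Local framework: an immersed surface in ℝⁿ is given by a smooth parametrization
`ψ : Pl → Amb n` (`Pl = ℝ²` the parameter domain) whose differential is everywhere
injective.  Tangent/normal spaces, fundamental forms, connections, curvature ellipse,
(semi)umbilic and inflection points, flatness, etc. are defined from `ψ`. -/

noncomputable section
open scoped RealInnerProductSpace

/-- The parameter plane ℝ². -/
abbrev Pl := EuclideanSpace ℝ (Fin 2)
/-- Ambient Euclidean space ℝⁿ. -/
abbrev Amb (n : ℕ) := EuclideanSpace ℝ (Fin n)

/-- `ψ` is a smooth immersion. -/
def Immersion {n : ℕ} (ψ : Pl → Amb n) : Prop :=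
  ContDiff ℝ (⊤ : ℕ∞) ψ ∧ ∀ q, Function.Injective (fderiv ℝ ψ q)

/-- Tangent plane `T_pM` (as a linear subspace of the ambient space) at the point
with parameter `q`. -/
def Tang {n : ℕ} (ψ : Pl → Amb n) (q : Pl) : Submodule ℝ (Amb n) :=
  LinearMap.range (fderiv ℝ ψ q : Pl →ₗ[ℝ] Amb n)

/-- Normal space `N_pM = (T_pM)ᗮ`. -/
def Nor {n : ℕ} (ψ : Pl → Amb n) (q : Pl) : Submodule ℝ (Amb n) :=
  (Tang ψ q)ᗮ

/-- Tangential part `X ↦ X^⊤` of an ambient vector. -/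
def tproj {n : ℕ} (ψ : Pl → Amb n) (q : Pl) (x : Amb n) : Amb n :=
  ((Tang ψ q).orthogonalProjectionOnto x : Amb n)

/-- Normal part `X ↦ X^⊥` of an ambient vector. -/
def nproj {n : ℕ} (ψ : Pl → Amb n) (q : Pl) (x : Amb n) : Amb n :=
  x - tproj ψ q x

/-- The second fundamental form `α` at the point of parameter `q`, evaluated on the
tangent vectors `dψ_q v`, `dψ_q w` (for parameter directions `v w : Pl`):
`α(dψ v, dψ w) = (D_{dψ v} (dψ w))^⊥ = (∂_v ∂_w ψ)^⊥`. -/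
def sff {n : ℕ} (ψ : Pl → Amb n) (q : Pl) (v w : Pl) : Amb n :=
  nproj ψ q (fderiv ℝ (fun x => fderiv ℝ ψ x w) q v)

/-- The curvature ellipse at `q`: image of `η(t) = α(t,t)` over the unit tangent
vectors `t = dψ_q v`. -/
def Ellipse {n : ℕ} (ψ : Pl → Amb n) (q : Pl) : Set (Amb n) :=
  {z | ∃ v : Pl, ‖fderiv ℝ ψ q v‖ = 1 ∧ z = sff ψ q v v}

/-- `q` is an umbilic point: the curvature ellipse degenerates to a point. -/
def Umbilic {n : ℕ} (ψ : Pl → Amb n) (q : Pl) : Prop :=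
  ∃ a : Amb n, Ellipse ψ q = {a}

/-- `q` is a semiumbilic point: the curvature ellipse lies in an affine line. -/
def Semiumbilic {n : ℕ} (ψ : Pl → Amb n) (q : Pl) : Prop :=
  ∃ a b : Amb n, Ellipse ψ q ⊆ {x | ∃ s : ℝ, x = a + s • b}

/-- `q` is a point of inflection: the curvature ellipse lies in a line through the
origin of the normal space. -/
def Inflection {n : ℕ} (ψ : Pl → Amb n) (q : Pl) : Prop :=
  ∃ b : Amb n, Ellipse ψ q ⊆ {x | ∃ s : ℝ, x = s • b}

/-- The surface is semiumbilical: every point is semiumbilic and not of inflection. -/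
def Semiumbilical {n : ℕ} (ψ : Pl → Amb n) : Prop :=
  ∀ q, Semiumbilic ψ q ∧ ¬ Inflection ψ q

/-- A smooth ambient-valued field which is everywhere tangent. -/
def TangentField {n : ℕ} (ψ : Pl → Amb n) (F : Pl → Amb n) : Prop :=
  ContDiff ℝ (⊤ : ℕ∞) F ∧ ∀ q, F q ∈ Tang ψ q

/-- A smooth ambient-valued field which is everywhere normal (a section of `NM`). -/
def NormalField {n : ℕ} (ψ : Pl → Amb n) (F : Pl → Amb n) : Prop :=
  ContDiff ℝ (⊤ : ℕ∞) F ∧ ∀ q, F q ∈ Nor ψ q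

/-- The tangent covariant derivative `∇^⊤ F = (D F)^⊤` of an ambient field `F`
along the `i`-th coordinate direction of the parameter plane. -/
def covT {n : ℕ} (ψ : Pl → Amb n) (F : Pl → Amb n) (i : Fin 2) (q : Pl) : Amb n :=
  tproj ψ q (fderiv ℝ F q (EuclideanSpace.single i (1:ℝ)))

/-- The tangent connection `∇^⊤` is flat: its curvature `R(∂₁,∂₂)` annihilates every
smooth tangent field (by tensoriality of the curvature this means `R = 0`, since the
coordinate fields `∂₁, ∂₂` commute and span). -/
def FlatSurface {n : ℕ} (ψ : Pl → Amb n) : Prop :=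
  ∀ F : Pl → Amb n, TangentField ψ F →
    ∀ q, covT ψ (covT ψ F 1) 0 q = covT ψ (covT ψ F 0) 1 q

/-- A tangent field is parallel: `∇^⊤ Y = (D Y)^⊤ = 0` in every tangent direction. -/
def ParallelT {n : ℕ} (ψ : Pl → Amb n) (F : Pl → Amb n) : Prop :=
  ∀ q (v : Pl), tproj ψ q (fderiv ℝ F q v) = 0

/-- A normal section is parallel: `∇^⊥ u = (D u)^⊥ = 0` in every tangent direction. -/
def ParallelN {n : ℕ} (ψ : Pl → Amb n) (F : Pl → Amb n) : Prop :=
  ∀ q (v : Pl), nproj ψ q (fderiv ℝ F q v) = 0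

/-- `c · α = g`: the normal section `c` satisfies `⟨c, α(X,Y)⟩ = ⟨X,Y⟩` for all
tangent vectors `X = dψ v`, `Y = dψ w`. -/
def CAG {n : ℕ} (ψ : Pl → Amb n) (c : Pl → Amb n) : Prop :=
  ∀ q (v w : Pl), (⟪c q, sff ψ q v w⟫) = ⟪fderiv ℝ ψ q v, fderiv ℝ ψ q w⟫

/-- `e` is a tangent field with `∇^⊤_X e = X` for every tangent vector `X = dψ v`. -/
def EulerField {n : ℕ} (ψ : Pl → Amb n) (e : Pl → Amb n) : Prop :=
  TangentField ψ e ∧ ∀ q (v : Pl), tproj ψ q (fderiv ℝ e q v) = fderiv ℝ ψ q v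

/-- `j` is the tangent field `½ grad⟨c,c⟩` (gradient with respect to the first
fundamental form): `⟨2 j, dψ v⟩ = d⟨c,c⟩(dψ v)` for every direction `v`. -/
def HalfGradCSq {n : ℕ} (ψ : Pl → Amb n) (c j : Pl → Amb n) : Prop :=
  TangentField ψ j ∧
    ∀ q (v : Pl), 2 * (⟪j q, fderiv ℝ ψ q v⟫) = fderiv ℝ (fun x => (⟪c x, c x⟫ : ℝ)) q v

/-- `k` is a normal section with `(D_X (e - k))^⊥ = 0` for all tangent `X`. -/
def KField {n : ℕ} (ψ : Pl → Amb n) (e k : Pl → Amb n) : Prop :=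
  NormalField ψ k ∧ ∀ q (v : Pl), nproj ψ q (fderiv ℝ (fun x => e x - k x) q v) = 0

/-- `dψ_q v` is a (unit) asymptotic direction at `q`: `η(t) = α(t,t)` is an endpoint
(extreme point) of the segment into which the curvature ellipse degenerates. -/
def IsAsymptotic {n : ℕ} (ψ : Pl → Amb n) (q : Pl) (v : Pl) : Prop :=
  ‖fderiv ℝ ψ q v‖ = 1 ∧ sff ψ q v v ∈ Set.extremePoints ℝ (Ellipse ψ q)

/- In a frame `(t₁, t₂)` with `α(t₁, t₂) = 0`, bilinearity gives `α(X, Y) = ⟨X, Y⟩ H + r B` for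
some scalar `r`, so the curvature ellipse is the segment `H + [-1, 1] B`. If `H` and `B` were
proportional the point would be an inflection; hence `B ≠ 0` and `H, B` span the normal plane,
which is two-dimensional. The vector `JB` is normal, nonzero and orthogonal to `B`, so
`⟨H, JB⟩ ≠ 0`; pairing the formula for `α` with `JB` kills the `B` term and leaves
`⟨JB, α(X, Y)⟩ = ⟨X, Y⟩ ⟨H, JB⟩`. -/

section LinearAlgebra

variable {𝕜 E : Type*} [RCLike 𝕜] [NormedAddCommGroup E] [InnerProductSpace 𝕜 E]

theorem linearIndependent_pair_of_inner_eq_zero {x y : E} (hx : x ≠ 0) (hy : y ≠ 0)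
    (hxy : inner 𝕜 x y = 0) : LinearIndependent 𝕜 ![x, y] := by
  refine linearIndependent_of_ne_zero_of_inner_eq_zero (by simp [Fin.forall_fin_two, hx, hy]) ?_
  intro i j hij
  fin_cases i <;> fin_cases j <;> simp_all [inner_eq_zero_symm]

theorem span_pair_eq_top_of_map_inner_eq_zero {V : Type*} [AddCommGroup V] [Module 𝕜 V]
    [FiniteDimensional 𝕜 V] (hV : Module.finrank 𝕜 V = 2) (f : V →ₗ[𝕜] E) {t₁ t₂ : V}
    (h₁ : f t₁ ≠ 0) (h₂ : f t₂ ≠ 0) (h₁₂ : inner 𝕜 (f t₁) (f t₂) = 0) :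
    Submodule.span 𝕜 {t₁, t₂} = ⊤ := by
  have hli : LinearIndependent 𝕜 ![t₁, t₂] :=
    .of_comp f (by
      convert linearIndependent_pair_of_inner_eq_zero h₁ h₂ h₁₂ using 1
      ext i; fin_cases i <;> rfl)
  rw [← Matrix.range_cons_cons_empty t₁ t₂ ![]]
  exact hli.span_eq_top_of_card_eq_finrank' (by simp [hV])

theorem exists_eq_smul_of_inner_eq_zero {K : Submodule 𝕜 E} (hK : Module.finrank 𝕜 K = 2)
    {b u h : E} (hb : b ∈ K) (hu : u ∈ K) (hh : h ∈ K) (hb₀ : b ≠ 0) (hu₀ : u ≠ 0)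
    (hub : inner 𝕜 u b = 0) (hhu : inner 𝕜 h u = 0) : ∃ s : 𝕜, h = s • b := by
  have : FiniteDimensional 𝕜 K := .of_finrank_pos (by omega)
  have hspan : Submodule.span 𝕜 {b, u} = K := by
    refine Submodule.eq_of_le_of_finrank_eq
      (Submodule.span_le.mpr (by simp [Set.insert_subset_iff, hb, hu])) ?_
    have hli := linearIndependent_pair_of_inner_eq_zero hb₀ hu₀ (inner_eq_zero_symm.mp hub)
    rw [hK, ← Matrix.range_cons_cons_empty b u ![], finrank_span_eq_card hli, Fintype.card_fin]
  obtain ⟨s, t, rfl⟩ := Submodule.mem_span_pair.mp (hspan ▸ hh)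
  have ht : t = 0 := by
    simpa [inner_add_left, inner_smul_left, inner_eq_zero_symm.mp hub, hu₀] using hhu
  exact ⟨s, by simp [ht]⟩

end LinearAlgebra

structure IsDiagonalFrame {n : ℕ} (ψ : Pl → Amb n) (q t₁ t₂ : Pl) : Prop where
  norm_fst : ‖fderiv ℝ ψ q t₁‖ = 1
  norm_snd : ‖fderiv ℝ ψ q t₂‖ = 1
  inner_eq_zero : ⟪fderiv ℝ ψ q t₁, fderiv ℝ ψ q t₂⟫ = 0
  sff_eq_zero : sff ψ q t₁ t₂ = 0

section Surface

variable {n : ℕ} {ψ : Pl → Amb n} {q : Pl}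

theorem nproj_eq_starProjection (x : Amb n) : nproj ψ q x = (Nor ψ q).starProjection x :=
  (Submodule.starProjection_orthogonal_val x).symm

theorem sff_mem_nor (v w : Pl) : sff ψ q v w ∈ Nor ψ q := by
  rw [sff, nproj_eq_starProjection]
  exact Submodule.starProjection_apply_mem _ _

theorem sff_eq_starProjection_fderiv_fderiv (hψ : ContDiff ℝ (⊤ : ℕ∞) ψ) (v w : Pl) :
    sff ψ q v w = (Nor ψ q).starProjection (fderiv ℝ (fderiv ℝ ψ) q v w) := by
  have hd : DifferentiableAt ℝ (fderiv ℝ ψ) q :=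
    (contDiff_infty_iff_fderiv.mp hψ).2.differentiable (by norm_num) q
  rw [sff, nproj_eq_starProjection, fderiv_clm_apply hd (differentiableAt_const w)]
  simp

theorem sff_comm (hψ : ContDiff ℝ (⊤ : ℕ∞) ψ) (v w : Pl) : sff ψ q v w = sff ψ q w v := by
  have hd : DifferentiableAt ℝ (fderiv ℝ ψ) q :=
    (contDiff_infty_iff_fderiv.mp hψ).2.differentiable (by norm_num) q
  rw [sff_eq_starProjection_fderiv_fderiv hψ, sff_eq_starProjection_fderiv_fderiv hψ,
    second_derivative_symmetric (fun y => (hψ.differentiable (by simp) y).hasFDerivAt)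
      hd.hasFDerivAt v w]

theorem finrank_nor_add_two (hinj : Function.Injective (fderiv ℝ ψ q)) :
    Module.finrank ℝ (Nor ψ q) + 2 = n := by
  have hT : Module.finrank ℝ (Tang ψ q) = 2 := by
    rw [Tang, LinearMap.finrank_range_of_inj (f := (fderiv ℝ ψ q : Pl →ₗ[ℝ] Amb n)) hinj]
    simp
  rw [← hT, add_comm, Nor, Submodule.finrank_add_finrank_orthogonal]
  simp

theorem exists_sff_eq_inner_smul_add_smul (hψ : ContDiff ℝ (⊤ : ℕ∞) ψ) {t₁ t₂ : Pl}
    (ht : IsDiagonalFrame ψ q t₁ t₂) {H B : Amb n}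
    (hH : H = (1/2 : ℝ) • (sff ψ q t₁ t₁ + sff ψ q t₂ t₂))
    (hB : B = (1/2 : ℝ) • (sff ψ q t₁ t₁ - sff ψ q t₂ t₂)) (v w : Pl) :
    ∃ r : ℝ, sff ψ q v w = ⟪fderiv ℝ ψ q v, fderiv ℝ ψ q w⟫ • H + r • B := by
  have hspan := span_pair_eq_top_of_map_inner_eq_zero (by simp) (fderiv ℝ ψ q : Pl →ₗ[ℝ] Amb n)
    (t₁ := t₁) (t₂ := t₂) (by simp [← norm_ne_zero_iff, ht.norm_fst])
    (by simp [← norm_ne_zero_iff, ht.norm_snd]) ht.inner_eq_zero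
  obtain ⟨a₁, a₂, rfl⟩ := Submodule.mem_span_pair.mp (hspan ▸ Submodule.mem_top (x := v))
  obtain ⟨b₁, b₂, rfl⟩ := Submodule.mem_span_pair.mp (hspan ▸ Submodule.mem_top (x := w))
  have hα := ht.sff_eq_zero
  have hα' : sff ψ q t₂ t₁ = 0 := sff_comm hψ t₂ t₁ ▸ hα
  refine ⟨a₁ * b₁ - a₂ * b₂, ?_⟩
  simp only [sff_eq_starProjection_fderiv_fderiv hψ] at hα hα' hH hB ⊢
  simp only [map_add, map_smul, add_apply, smul_apply, hα, hα', inner_add_left, inner_add_right,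
    real_inner_smul_right, real_inner_self_eq_norm_sq, ht.norm_fst, ht.norm_snd,
    ht.inner_eq_zero, real_inner_comm, hH, hB]
  module

theorem inflection_of_mem_span_singleton (hψ : ContDiff ℝ (⊤ : ℕ∞) ψ) {t₁ t₂ : Pl}
    (ht : IsDiagonalFrame ψ q t₁ t₂) {H B : Amb n}
    (hH : H = (1/2 : ℝ) • (sff ψ q t₁ t₁ + sff ψ q t₂ t₂))
    (hB : B = (1/2 : ℝ) • (sff ψ q t₁ t₁ - sff ψ q t₂ t₂)) {b : Amb n}
    (hHb : H ∈ Submodule.span ℝ {b}) (hBb : B ∈ Submodule.span ℝ {b}) : Inflection ψ q := by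
  refine ⟨b, ?_⟩
  rintro _ ⟨v, -, rfl⟩
  obtain ⟨r, hr⟩ := exists_sff_eq_inner_smul_add_smul hψ ht hH hB v v
  obtain ⟨s, hs⟩ := Submodule.mem_span_singleton.mp
    (hr ▸ add_mem (Submodule.smul_mem _ _ hHb) (Submodule.smul_mem _ _ hBb))
  exact ⟨s, hs.symm⟩

theorem ne_zero_of_not_inflection (hψ : ContDiff ℝ (⊤ : ℕ∞) ψ) (hq : ¬ Inflection ψ q)
    {t₁ t₂ : Pl} (ht : IsDiagonalFrame ψ q t₁ t₂) {H B : Amb n}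
    (hH : H = (1/2 : ℝ) • (sff ψ q t₁ t₁ + sff ψ q t₂ t₂))
    (hB : B = (1/2 : ℝ) • (sff ψ q t₁ t₁ - sff ψ q t₂ t₂)) : B ≠ 0 := by
  rintro rfl
  exact hq (inflection_of_mem_span_singleton hψ ht hH hB (Submodule.mem_span_singleton_self H)
    (zero_mem _))

theorem inner_ne_zero_of_not_inflection {ψ : Pl → Amb 4} (hψ : Immersion ψ)
    (hq : ¬ Inflection ψ q) {t₁ t₂ : Pl} (ht : IsDiagonalFrame ψ q t₁ t₂) {H B : Amb 4}
    (hH : H = (1/2 : ℝ) • (sff ψ q t₁ t₁ + sff ψ q t₂ t₂))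
    (hB : B = (1/2 : ℝ) • (sff ψ q t₁ t₁ - sff ψ q t₂ t₂)) {u : Amb 4} (hu : u ∈ Nor ψ q)
    (hu₀ : u ≠ 0) (huB : ⟪u, B⟫ = 0) : ⟪H, u⟫ ≠ 0 := by
  intro hHu
  have hHN : H ∈ Nor ψ q :=
    hH ▸ Submodule.smul_mem _ _ (add_mem (sff_mem_nor _ _) (sff_mem_nor _ _))
  have hBN : B ∈ Nor ψ q :=
    hB ▸ Submodule.smul_mem _ _ (sub_mem (sff_mem_nor _ _) (sff_mem_nor _ _))
  have hrank : Module.finrank ℝ (Nor ψ q) = 2 := by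
    have := finrank_nor_add_two (hψ.2 q); omega
  obtain ⟨s, rfl⟩ := exists_eq_smul_of_inner_eq_zero hrank hBN hu hHN
    (ne_zero_of_not_inflection hψ.1 hq ht hH hB) hu₀ huB hHu
  exact hq (inflection_of_mem_span_singleton hψ.1 ht hH hB
    (Submodule.smul_mem _ _ (Submodule.mem_span_singleton_self B))
    (Submodule.mem_span_singleton_self B))

end Surface

theorem statement_2_general (ψ : Pl → Amb 4) (hψ : Immersion ψ) (hsem : Semiumbilical ψ)
    (T₁ T₂ : Pl → Pl)
    (hT₁ : ∀ q, ‖fderiv ℝ ψ q (T₁ q)‖ = 1) (hT₂ : ∀ q, ‖fderiv ℝ ψ q (T₂ q)‖ = 1)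
    (hT₁₂ : ∀ q, ⟪fderiv ℝ ψ q (T₁ q), fderiv ℝ ψ q (T₂ q)⟫ = 0)
    (hb₃ : ∀ q, sff ψ q (T₁ q) (T₂ q) = 0)
    (J : Pl → (Amb 4 →ₗ[ℝ] Amb 4))
    (hJmem : ∀ q, ∀ u ∈ Nor ψ q, J q u ∈ Nor ψ q)
    (hJorth : ∀ q, ∀ u ∈ Nor ψ q, ⟪J q u, u⟫ = 0)
    (hJiso : ∀ q, ∀ u ∈ Nor ψ q, (⟪J q u, J q u⟫ : ℝ) = ⟪u, u⟫)
    (B H : Pl → Amb 4)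
    (hB : ∀ q, B q = (1/2 : ℝ) • (sff ψ q (T₁ q) (T₁ q) - sff ψ q (T₂ q) (T₂ q)))
    (hH : ∀ q, H q = (1/2 : ℝ) • (sff ψ q (T₁ q) (T₁ q) + sff ψ q (T₂ q) (T₂ q))) :
    (∀ q, (⟪H q, J q (B q)⟫ : ℝ) ≠ 0) ∧
    ∀ q (v w : Pl),
      ⟪((⟪H q, J q (B q)⟫ : ℝ))⁻¹ • J q (B q), sff ψ q v w⟫
        = ⟪fderiv ℝ ψ q v, fderiv ℝ ψ q w⟫ := by
  have hT : ∀ q, IsDiagonalFrame ψ q (T₁ q) (T₂ q) := fun q => ⟨hT₁ q, hT₂ q, hT₁₂ q, hb₃ q⟩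
  have hBN : ∀ q, B q ∈ Nor ψ q := fun q =>
    hB q ▸ Submodule.smul_mem _ _ (sub_mem (sff_mem_nor _ _) (sff_mem_nor _ _))
  have hHJB : ∀ q, ⟪H q, J q (B q)⟫ ≠ 0 := fun q => by
    have hB₀ := ne_zero_of_not_inflection hψ.1 (hsem q).2 (hT q) (hH q) (hB q)
    have hJB₀ : J q (B q) ≠ 0 := fun h =>
      hB₀ (inner_self_eq_zero.mp (by rw [← hJiso q _ (hBN q), h, inner_zero_left]))
    exact inner_ne_zero_of_not_inflection hψ (hsem q).2 (hT q) (hH q) (hB q)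
      (hJmem q _ (hBN q)) hJB₀ (hJorth q _ (hBN q))
  refine ⟨hHJB, fun q v w => ?_⟩
  obtain ⟨r, hr⟩ := exists_sff_eq_inner_smul_add_smul hψ.1 (hT q) (hH q) (hB q) v w
  rw [hr, real_inner_smul_left, inner_add_right, real_inner_smul_right, real_inner_smul_right,
    hJorth q _ (hBN q), real_inner_comm (H q), mul_zero, add_zero]
  field_simp [hHJB q]

/-- For a semiumbilical surface in ℝ⁴ with an orthonormal frame `(t₁,t₂)`
with `α(t₁,t₂) = 0`, setting `B = ½(α(t₁,t₁) - α(t₂,t₂))`, `H = ½(α(t₁,t₁) + α(t₂,t₂))`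
and `J` a fibrewise complex structure of the normal bundle, `⟨H, JB⟩` is nowhere zero
and `c = JB/⟨H,JB⟩` satisfies `c·α = g`. -/
theorem statement_2 (ψ : Pl → Amb 4) (hψ : Immersion ψ) (hsem : Semiumbilical ψ)
    (T₁ T₂ : Pl → Pl)
    (hT₁ : ∀ q, ‖fderiv ℝ ψ q (T₁ q)‖ = 1) (hT₂ : ∀ q, ‖fderiv ℝ ψ q (T₂ q)‖ = 1)
    (hT₁₂ : ∀ q, ⟪fderiv ℝ ψ q (T₁ q), fderiv ℝ ψ q (T₂ q)⟫ = 0)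
    (hb₃ : ∀ q, sff ψ q (T₁ q) (T₂ q) = 0)
    (J : Pl → (Amb 4 →ₗ[ℝ] Amb 4))
    (hJmem : ∀ q, ∀ u ∈ Nor ψ q, J q u ∈ Nor ψ q)
    (hJsq : ∀ q, ∀ u ∈ Nor ψ q, J q (J q u) = -u)
    (hJorth : ∀ q, ∀ u ∈ Nor ψ q, ⟪J q u, u⟫ = 0)
    (hJiso : ∀ q, ∀ u ∈ Nor ψ q, (⟪J q u, J q u⟫ : ℝ) = ⟪u, u⟫)
    (B H : Pl → Amb 4)
    (hB : ∀ q, B q = (1/2 : ℝ) • (sff ψ q (T₁ q) (T₁ q) - sff ψ q (T₂ q) (T₂ q)))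
    (hH : ∀ q, H q = (1/2 : ℝ) • (sff ψ q (T₁ q) (T₁ q) + sff ψ q (T₂ q) (T₂ q))) :
    (∀ q, (⟪H q, J q (B q)⟫ : ℝ) ≠ 0) ∧
    ∀ q (v w : Pl),
      ⟪((⟪H q, J q (B q)⟫ : ℝ))⁻¹ • J q (B q), sff ψ q v w⟫
        = ⟪fderiv ℝ ψ q v, fderiv ℝ ψ q w⟫ :=
  statement_2_general ψ hψ hsem T₁ T₂ hT₁ hT₂ hT₁₂ hb₃ J hJmem hJorth hJiso B H hB hH
end
end

section
/- Let M be a flat semiumbilical surface immersed in ℝⁿ, let c be a normal section with c·α = g, let Z be a parallel tangent vector field on M (∇^⊤Z = 0), and put f = id + c + Z : M → ℝⁿ, f(p) = p + c_p + Z_p. Then df(T_pM) ⊂ N_pM for every p ∈ M. -/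
/- Local framework: an immersed surface in ℝⁿ is given by a smooth parametrization
`ψ : Pl → Amb n` (`Pl = ℝ²` the parameter domain) whose differential is everywhere
injective.  Tangent/normal spaces, fundamental forms, connections, curvature ellipse,
(semi)umbilic and inflection points, flatness, etc. are defined from `ψ`. -/

noncomputable section
open scoped RealInnerProductSpace

/-
The tangential part of `df = dψ + dc + dZ` vanishes term by term. `Z` is parallel, so `dZ` is
normal. Differentiating `⟨c, dψ w⟩ ≡ 0` gives the Weingarten relation
`⟨dc v, dψ w⟩ = -⟨c, α(v, w)⟩`, which `c · α = g` turns into `-⟨dψ v, dψ w⟩`; so `dψ v + dc v`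
is normal as well.
-/

variable {n : ℕ} {ψ : Pl → Amb n} {q : Pl}

theorem mem_nor_of_tproj_eq_zero {x : Amb n} (h : tproj ψ q x = 0) : x ∈ Nor ψ q :=
  Submodule.orthogonalProjectionOnto_eq_zero_iff.mp (Subtype.ext h)

theorem ParallelT.fderiv_mem_nor {Z : Pl → Amb n} (hZ : ParallelT ψ Z) (v : Pl) :
    fderiv ℝ Z q v ∈ Nor ψ q :=
  mem_nor_of_tproj_eq_zero (hZ q v)

theorem inner_nproj_of_mem_nor {x : Amb n} (hx : x ∈ Nor ψ q) (y : Amb n) :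
    ⟪x, nproj ψ q y⟫ = ⟪x, y⟫ := by
  have htang : ⟪x, tproj ψ q y⟫ = 0 :=
    Submodule.inner_left_of_mem_orthogonal (SetLike.coe_mem _) hx
  rw [nproj, inner_sub_right, htang, sub_zero]

theorem inner_fderiv_fderiv_eq_neg_inner_sff {c : Pl → Amb n} (hc : ∀ x, c x ∈ Nor ψ x)
    {v w : Pl} (hcq : DifferentiableAt ℝ c q)
    (hψq : DifferentiableAt ℝ (fun x => fderiv ℝ ψ x w) q) :
    ⟪fderiv ℝ c q v, fderiv ℝ ψ q w⟫ = -⟪c q, sff ψ q v w⟫ := by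
  have hperp : (fun x => ⟪c x, fderiv ℝ ψ x w⟫) = fun _ => 0 :=
    funext fun x => Submodule.inner_left_of_mem_orthogonal (LinearMap.mem_range_self _ w) (hc x)
  have hder := fderiv_inner_apply (𝕜 := ℝ) hcq hψq v
  rw [hperp, fderiv_const_apply, zero_apply] at hder
  rw [sff, inner_nproj_of_mem_nor (hc q)]
  linarith

theorem CAG.fderiv_add_fderiv_mem_nor {c : Pl → Amb n} (hcg : CAG ψ c) (hc : ∀ x, c x ∈ Nor ψ x)
    (hcq : DifferentiableAt ℝ c q)
    (hψq : ∀ w, DifferentiableAt ℝ (fun x => fderiv ℝ ψ x w) q) (v : Pl) :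
    fderiv ℝ ψ q v + fderiv ℝ c q v ∈ Nor ψ q := by
  rw [Nor, Submodule.mem_orthogonal]
  rintro _ ⟨w, rfl⟩
  have hweingarten := inner_fderiv_fderiv_eq_neg_inner_sff hc (v := v) hcq (hψq w)
  rw [hcg, real_inner_comm] at hweingarten
  change ⟪fderiv ℝ ψ q w, _⟫ = 0
  rw [inner_add_right, hweingarten, real_inner_comm (fderiv ℝ ψ q v), add_neg_cancel]

theorem statement_10_general {n : ℕ} (ψ : Pl → Amb n) (hψ : Immersion ψ)
    (c : Pl → Amb n) (hc : NormalField ψ c) (hcg : CAG ψ c)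
    (Z : Pl → Amb n) (hZ : TangentField ψ Z) (hZp : ParallelT ψ Z) :
    ∀ q (v : Pl), fderiv ℝ (fun x => ψ x + c x + Z x) q v ∈ Nor ψ q := by
  intro q v
  have hψd : Differentiable ℝ ψ := hψ.1.differentiable (by simp)
  have hcd : Differentiable ℝ c := hc.1.differentiable (by simp)
  have hZd : Differentiable ℝ Z := hZ.1.differentiable (by simp)
  have hdψ (w : Pl) : ContDiff ℝ (⊤ : ℕ∞) (fun x => fderiv ℝ ψ x w) :=
    (hψ.1.fderiv_right (by exact_mod_cast le_top)).clm_apply contDiff_const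
  have hdψd (w : Pl) : DifferentiableAt ℝ (fun x => fderiv ℝ ψ x w) q :=
    (hdψ w).differentiable (by simp) q
  rw [fderiv_fun_add (f := fun x => ψ x + c x) ((hψd q).add (hcd q)) (hZd q),
    fderiv_fun_add (hψd q) (hcd q)]
  exact add_mem (hcg.fderiv_add_fderiv_mem_nor hc.2 (hcd q) hdψd v) (hZp.fderiv_mem_nor v)

/-- For a flat semiumbilical surface in ℝⁿ, `c` a normal section with
`c·α = g` and `Z` a parallel tangent field, `f = id + c + Z` satisfies
`df(T_pM) ⊆ N_pM` for every `p`. -/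
theorem statement_10 {n : ℕ} (ψ : Pl → Amb n) (hψ : Immersion ψ)
    (hflat : FlatSurface ψ) (hsem : Semiumbilical ψ)
    (c : Pl → Amb n) (hc : NormalField ψ c) (hcg : CAG ψ c)
    (Z : Pl → Amb n) (hZ : TangentField ψ Z) (hZp : ParallelT ψ Z) :
    ∀ q (v : Pl), fderiv ℝ (fun x => ψ x + c x + Z x) q v ∈ Nor ψ q :=
  statement_10_general ψ hψ c hc hcg Z hZ hZp
end
end
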